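/- arXiv:1909.10597 — 7 statements merged into one kernel-verified Lean document; each statement's English description precedes it below -/
import Mathlib

section
/- Let S ⊆ M_n(ℂ) and suppose η·I ∈ Co(S) for some η ∈ ℂ. Then HS(S) is star-shaped from η: for every λ ∈ HS(S) and α ∈ [0,1], the point (1−α)λ + αη belongs to HS(S). -/
/-! The point `(1 - α) λ + α η` is an eigenvalue of `(1 - α) M + α (η I)` whenever `λ` is an
eigenvalue of `M`, because the spectrum commutes with scaling and with adding scalars; and that
matrix lies in `Co(S)` by convexity. -/

open Matrix

/-- The hull spectrum of a set of matrices: all eigenvalues of matrices in the convex hull. -/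
def HS {n : ℕ} (S : Set (Matrix (Fin n) (Fin n) ℂ)) : Set ℂ :=
  {z | ∃ M ∈ convexHull ℝ S, z ∈ spectrum ℂ M}

theorem spectrum.nontrivial_of_nonempty {R A : Type*} [CommSemiring R] [Ring A] [Algebra R A]
    {a : A} (ha : (spectrum R a).Nonempty) : Nontrivial A := by
  by_contra h
  rw [not_nontrivial_iff_subsingleton] at h
  simp [spectrum.of_subsingleton] at ha

theorem spectrum.smul_add_algebraMap_mem {𝕜 A : Type*} [Field 𝕜] [Ring A] [Algebra 𝕜 A]
    {a : A} {μ : 𝕜} (hμ : μ ∈ spectrum 𝕜 a) (s c : 𝕜) :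
    s * μ + c ∈ spectrum 𝕜 (s • a + algebraMap 𝕜 A c) := by
  rw [add_comm (s • a), spectrum.add_mem_add_iff]
  rcases eq_or_ne s 0 with rfl | hs
  · have := spectrum.nontrivial_of_nonempty ⟨μ, hμ⟩
    simp
  · exact spectrum.smul_mem_smul_iff (r := Units.mk0 s hs) |>.2 hμ

theorem hull_spectrum_star_shaped {n : ℕ} (S : Set (Matrix (Fin n) (Fin n) ℂ)) (η : ℂ)
    (hη : η • (1 : Matrix (Fin n) (Fin n) ℂ) ∈ convexHull ℝ S) :
    ∀ lam ∈ HS S, ∀ α : ℝ, α ∈ Set.Icc (0 : ℝ) 1 →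
      (1 - (α : ℂ)) * lam + (α : ℂ) * η ∈ HS S := by
  rintro lam ⟨M, hM, hlam⟩ α ⟨h0, h1⟩
  refine ⟨(1 - α) • M + α • η • 1, convex_convexHull ℝ S hM hη (by linarith) h0 (by ring), ?_⟩
  have hcomb : (1 - α) • M + α • η • (1 : Matrix (Fin n) (Fin n) ℂ)
      = (1 - (α : ℂ)) • M + algebraMap ℂ _ ((α : ℂ) * η) := by
    rw [Algebra.algebraMap_eq_smul_one, ← Complex.coe_smul, ← Complex.coe_smul, smul_smul]
    push_cast
    rfl
  rw [hcomb]
  exact spectrum.smul_add_algebraMap_mem hlam _ _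
end

section
/- If λ ∈ ℝ, λ < 0, λ ≠ −1, then the set of convex combinations of elements of the multiplicative group ⟨λ⟩ = {λ^k : k ∈ ℤ} is all of ℝ. -/
/-! The powers of a negative `λ` with `|λ| ≠ 1` are unbounded above, because some power `λ ^ c`
exceeds `1`, and hence also unbounded below, because multiplying by `λ < 0` permutes them.
A subset of an ordered field that is unbounded in both directions has every point between two of
its elements, so its convex hull is everything. -/

open Set

section LinearOrderedField

variable {𝕜 : Type*} [Field 𝕜] [LinearOrder 𝕜] [IsStrictOrderedRing 𝕜]

theorem convexHull_eq_univ_of_not_bddAbove_of_not_bddBelow {s : Set 𝕜} (hA : ¬BddAbove s)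
    (hB : ¬BddBelow s) : convexHull 𝕜 s = univ := by
  refine eq_univ_of_forall fun x => ?_
  obtain ⟨a, has, hax⟩ := not_bddBelow_iff.mp hB x
  obtain ⟨b, hbs, hxb⟩ := not_bddAbove_iff.mp hA x
  exact (convex_convexHull 𝕜 s).ordConnected.out (subset_convexHull 𝕜 s has)
    (subset_convexHull 𝕜 s hbs) ⟨hax.le, hxb.le⟩

theorem exists_one_lt_zpow_of_abs_ne_one {a : 𝕜} (h0 : a ≠ 0) (h1 : |a| ≠ 1) :
    ∃ c : ℤ, 1 < a ^ c := by
  have hsq : a ^ (2 : ℤ) = |a| ^ 2 := by rw [zpow_two, ← sq, sq_abs]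
  rcases h1.lt_or_gt with hlt | hgt
  · refine ⟨-2, ?_⟩
    rw [zpow_neg, hsq]
    exact one_lt_inv₀ (by positivity) |>.mpr (pow_lt_one₀ (abs_nonneg a) hlt two_ne_zero)
  · exact ⟨2, hsq ▸ one_lt_pow₀ hgt two_ne_zero⟩

theorem not_bddAbove_range_zpow [Archimedean 𝕜] {a : 𝕜} (h0 : a ≠ 0) (h1 : |a| ≠ 1) :
    ¬BddAbove (range fun k : ℤ => a ^ k) := by
  obtain ⟨c, hc⟩ := exists_one_lt_zpow_of_abs_ne_one h0 h1
  rintro ⟨M, hM⟩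
  obtain ⟨n, hn⟩ := pow_unbounded_of_one_lt M hc
  exact hn.not_ge (hM ⟨c * n, (zpow_mul a c n).trans (zpow_natCast _ n)⟩)

theorem not_bddBelow_range_zpow_of_neg [Archimedean 𝕜] {a : 𝕜} (ha : a < 0) (h1 : |a| ≠ 1) :
    ¬BddBelow (range fun k : ℤ => a ^ k) := by
  rintro ⟨m, hm⟩
  refine not_bddAbove_range_zpow ha.ne h1 ⟨m / a, ?_⟩
  rintro _ ⟨k, rfl⟩
  have : m ≤ a * a ^ k := by
    simpa only [zpow_add_one₀ ha.ne, mul_comm] using hm ⟨k + 1, rfl⟩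
  exact (le_div_iff_of_neg ha).mpr (by linarith)

end LinearOrderedField

theorem convexHull_zpowers_neg_real {lam : ℝ} (hneg : lam < 0) (hne : lam ≠ -1) :
    convexHull ℝ (Set.range fun k : ℤ => lam ^ k) = Set.univ := by
  have habs : |lam| ≠ 1 := by
    rw [abs_of_neg hneg]
    exact fun h => hne (by linarith)
  exact convexHull_eq_univ_of_not_bddAbove_of_not_bddBelow
    (not_bddAbove_range_zpow hneg.ne habs) (not_bddBelow_range_zpow_of_neg hneg habs)
end

section
/- If λ ∈ ℂ with |λ| ≠ 1 and λ ∉ ℝ, then the set of convex combinations of elements of ⟨λ⟩ = {λ^k : k ∈ ℤ} is all of ℂ. -/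
/-!
A convex set in `ℂ` other than `ℂ` itself has a proper closure, which lies in a closed half-plane
`{z | f z ≤ u}` for some nonzero real functional `f`. Every such `f` is of the form
`z ↦ Re (c z)` with `c ≠ 0`, and if `|λ| > 1` then `Re (c λ^k) = |c| |λ|^k cos (k arg λ + arg c)`.
Since `arg λ ∉ {0, π}`, the angles `k arg λ + arg c` return infinitely often to a fixed window
around `0 (mod 2π)`, where the cosine is bounded below by a positive constant, so `f` is unbounded
on the powers of `λ`. The case `|λ| < 1` reduces to this one through `λ⁻¹`.
-/

open Set Real

theorem Convex.eq_univ_of_closure_eq_univ {E : Type*} [NormedAddCommGroup E] [NormedSpace ℝ E]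
    [FiniteDimensional ℝ E] {s : Set E} (hs : Convex ℝ s) (h : closure s = univ) : s = univ := by
  have hspan : affineSpan ℝ s = ⊤ := by
    rw [← AffineSubspace.coe_eq_univ_iff, ← univ_subset_iff, ← h]
    exact (affineSpan ℝ s).closed_of_finiteDimensional.closure_subset_iff.2 (subset_affineSpan ℝ s)
  have hint := hs.interior_closure_eq_interior_of_nonempty_interior
    (hs.interior_nonempty_iff_affineSpan_eq_top.2 hspan)
  rw [h, interior_univ] at hint
  exact eq_univ_of_univ_subset (hint.trans_subset interior_subset)

theorem Convex.eq_univ_of_forall_bddAbove_image {E : Type*} [NormedAddCommGroup E]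
    [NormedSpace ℝ E] [FiniteDimensional ℝ E] {s : Set E} (hs : Convex ℝ s) (hne : s.Nonempty)
    (h : ∀ f : StrongDual ℝ E, BddAbove (f '' s) → f = 0) : s = univ := by
  refine hs.eq_univ_of_closure_eq_univ (eq_univ_of_forall fun x => ?_)
  by_contra hx
  obtain ⟨f, u, hfs, hux⟩ := geometric_hahn_banach_closed_point hs.closure isClosed_closure hx
  have hf : f = 0 := h f ⟨u, forall_mem_image.2 fun a ha => (hfs a (subset_closure ha)).le⟩
  obtain ⟨a, ha⟩ := hne
  have hfa := hfs a (subset_closure ha)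
  simp only [hf, zero_apply] at hfa hux
  linarith

theorem exists_nat_abs_add_mul_sub_le {γ t s : ℝ} (hγ : 0 < γ) (hts : t ≤ s) :
    ∃ m : ℕ, |t + m * γ - s| ≤ γ / 2 := by
  set x := (s - t) / γ
  have hxγ : x * γ = s - t := div_mul_cancel₀ _ hγ.ne'
  have hx : 0 ≤ x + 1 / 2 := by positivity
  have hle := mul_le_mul_of_nonneg_right (Nat.floor_le hx) hγ.le
  have hlt := mul_lt_mul_of_pos_right (Nat.lt_floor_add_one (x + 1 / 2)) hγ
  exact ⟨⌊x + 1 / 2⌋₊, abs_le.2 ⟨by linarith, by linarith⟩⟩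

theorem exists_nat_ge_cos_le_cos_mul_add {γ : ℝ} (hγ : 0 < γ) (hγπ : γ < π) (φ : ℝ) (N : ℕ) :
    ∃ k ≥ N, cos (γ / 2) ≤ cos (k * γ + φ) := by
  obtain ⟨j, hj⟩ := exists_nat_ge ((N * γ + φ) / (2 * π))
  obtain ⟨m, hm⟩ := exists_nat_abs_add_mul_sub_le (t := N * γ + φ) (s := j * (2 * π)) hγ
    ((div_le_iff₀ (by positivity)).1 hj)
  refine ⟨N + m, by omega, ?_⟩
  have hperiod : cos ((N + m : ℕ) * γ + φ) = cos |N * γ + φ + m * γ - j * (2 * π)| := by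
    rw [cos_abs, cos_sub_nat_mul_two_pi]; push_cast; ring_nf
  rw [hperiod]
  exact cos_le_cos_of_nonneg_of_le_pi (abs_nonneg _) (by linarith) hm

theorem exists_nat_ge_cos_abs_le_cos_mul_add {θ : ℝ} (hθ : θ ≠ 0) (hθπ : |θ| < π) (φ : ℝ)
    (N : ℕ) : ∃ k ≥ N, cos (|θ| / 2) ≤ cos (k * θ + φ) := by
  wlog hpos : 0 < θ generalizing θ φ
  · obtain ⟨k, hkN, hk⟩ := this (neg_ne_zero.2 hθ) (by rwa [abs_neg]) (-φ)
      (neg_pos.2 (lt_of_le_of_ne (not_lt.1 hpos) hθ))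
    refine ⟨k, hkN, ?_⟩
    rwa [abs_neg, mul_neg, ← neg_add, cos_neg] at hk
  rw [abs_of_pos hpos] at hθπ ⊢
  exact exists_nat_ge_cos_le_cos_mul_add hpos hθπ φ N

theorem Complex.re_mul_pow (c z : ℂ) (k : ℕ) :
    (c * z ^ k).re = ‖c‖ * ‖z‖ ^ k * Real.cos (k * z.arg + c.arg) := by
  conv_lhs => rw [← norm_mul_exp_arg_mul_I c, ← norm_mul_exp_arg_mul_I z]
  rw [mul_pow, ← exp_nat_mul]
  have hpolar : (‖c‖ : ℂ) * exp (c.arg * I) * ((‖z‖ : ℂ) ^ k * exp (k * (z.arg * I)))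
      = ((‖c‖ * ‖z‖ ^ k : ℝ) : ℂ) * exp ((k * z.arg + c.arg : ℝ) * I) := by
    push_cast; rw [add_mul, exp_add]; ring_nf
  rw [hpolar, re_ofReal_mul, exp_ofReal_mul_I_re]

theorem Complex.not_bddAbove_range_re_mul_pow {c z : ℂ} (hc : c ≠ 0) (hz : 1 < ‖z‖)
    (him : z.im ≠ 0) : ¬BddAbove (range fun k : ℕ => (c * z ^ k).re) := by
  rintro ⟨B, hB⟩
  have harg : z.arg ≠ 0 := fun h => him (arg_eq_zero_iff.1 h).2
  have hargπ : |z.arg| < π := abs_lt.2 ⟨neg_pi_lt_arg z, arg_lt_pi_iff.2 (Or.inr him)⟩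
  set δ := Real.cos (|z.arg| / 2)
  have hδ : 0 < δ := cos_pos_of_mem_Ioo ⟨by linarith [abs_nonneg z.arg], by linarith⟩
  have hcδ : 0 < ‖c‖ * δ := mul_pos (norm_pos_iff.2 hc) hδ
  obtain ⟨N, hN⟩ := pow_unbounded_of_one_lt (B / (‖c‖ * δ)) hz
  obtain ⟨k, hkN, hk⟩ := exists_nat_ge_cos_abs_le_cos_mul_add harg hargπ c.arg N
  refine lt_irrefl B ?_
  calc B < ‖c‖ * ‖z‖ ^ N * δ := by linarith [(div_lt_iff₀ hcδ).1 hN]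
    _ ≤ ‖c‖ * ‖z‖ ^ k * δ := by gcongr; exact hz.le
    _ ≤ (c * z ^ k).re := by rw [re_mul_pow]; gcongr
    _ ≤ B := hB ⟨k, rfl⟩

theorem Complex.not_bddAbove_range_apply_pow {f : StrongDual ℝ ℂ} (hf : f ≠ 0) {z : ℂ}
    (hz : 1 < ‖z‖) (him : z.im ≠ 0) : ¬BddAbove (range fun k : ℕ => f (z ^ k)) := by
  set c := (InnerProductSpace.toDual ℝ ℂ).symm f
  have hfc (w : ℂ) : f w = (starRingEnd ℂ c * w).re := by
    rw [← InnerProductSpace.toDual_symm_apply, Complex.inner, mul_comm]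
  have hc : starRingEnd ℂ c ≠ 0 := by simpa [c] using hf
  simpa only [hfc] using not_bddAbove_range_re_mul_pow hc hz him

theorem Set.range_inv_zpow {G : Type*} [DivisionRing G] (a : G) :
    (range fun k : ℤ => a⁻¹ ^ k) = range fun k : ℤ => a ^ k := by
  simpa only [inv_zpow', Function.comp_def] using neg_surjective.range_comp fun k : ℤ => a ^ k

theorem convexHull_zpowers_type5 {lam : ℂ} (habs : ‖lam‖ ≠ 1) (him : lam.im ≠ 0) :
    convexHull ℝ (Set.range fun k : ℤ => lam ^ k) = Set.univ := by
  wlog h1 : 1 < ‖lam‖ generalizing lam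
  · have hlam : lam ≠ 0 := by rintro rfl; exact him rfl
    have hinv : 1 < ‖lam⁻¹‖ := by
      rw [norm_inv]
      exact one_lt_inv₀ (norm_pos_iff.2 hlam) |>.2 (lt_of_le_of_ne (not_lt.1 h1) habs)
    rw [← range_inv_zpow]
    refine this hinv.ne' ?_ hinv
    rw [Complex.inv_im]
    exact div_ne_zero (neg_ne_zero.2 him) (Complex.normSq_pos.2 hlam).ne'
  refine (convex_convexHull ℝ _).eq_univ_of_forall_bddAbove_image
    ⟨1, subset_convexHull ℝ _ ⟨0, zpow_zero lam⟩⟩ fun f hf => ?_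
  by_contra hf0
  refine Complex.not_bddAbove_range_apply_pow hf0 h1 him (hf.mono ?_)
  rintro _ ⟨k, rfl⟩
  exact ⟨lam ^ (k : ℤ), subset_convexHull ℝ _ ⟨k, rfl⟩, by rw [zpow_natCast]⟩
end

section
/- Let G be a finite matrix group and suppose some A ∈ G has a primitive k-th root of unity as an eigenvalue. Then Π_k ⊆ HS(G), where Π_k is the convex hull of the k-th roots of unity. -/
/-!
If `A *ᵥ v = μ • v` with `v ≠ 0`, then `A ^ m *ᵥ v = μ ^ m • v`. The pairs `(M, z)` with
`M *ᵥ v = z • v` form a real subspace, so a convex combination of powers of `A` has `v` as an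
eigenvector, the eigenvalue being the same convex combination of the `μ ^ m`. For a primitive
`k`-th root of unity `μ`, these powers are all the `k`-th roots of unity.
-/

open Matrix

namespace Matrix

variable {n R : Type*} [Fintype n]

theorem convex_setOf_mulVec_eq_smul {𝕜 : Type*} [Semiring 𝕜] [PartialOrder 𝕜] [CommSemiring R]
    [Module 𝕜 R] [IsScalarTower 𝕜 R R] [SMulCommClass 𝕜 R R] (v : n → R) :
    Convex 𝕜 {p : Matrix n n R × R | p.1 *ᵥ v = p.2 • v} := by
  rintro ⟨M, z⟩ hp ⟨N, w⟩ hq a b - - -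
  change _ = _ at hp hq ⊢
  simp only [Prod.fst_add, Prod.snd_add, Prod.smul_fst, Prod.smul_snd, add_mulVec, smul_mulVec,
    hp, hq, add_smul, smul_assoc]

variable [DecidableEq n]

theorem exists_mulVec_eq_smul_of_mem_spectrum [Field R] {A : Matrix n n R} {μ : R}
    (h : μ ∈ spectrum R A) : ∃ v, v ≠ 0 ∧ A *ᵥ v = μ • v := by
  rw [← spectrum_toLin', ← Module.End.hasEigenvalue_iff_mem_spectrum] at h
  obtain ⟨v, hv⟩ := h.exists_hasEigenvector
  exact ⟨v, hv.2, by simpa using hv.apply_eq_smul⟩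

theorem mem_spectrum_of_mulVec_eq_smul [CommRing R] [Nontrivial R] {A : Matrix n n R}
    {v : n → R} {μ : R} (hv : v ≠ 0) (h : A *ᵥ v = μ • v) : μ ∈ spectrum R A := by
  rw [← spectrum_toLin']
  exact (Module.End.hasEigenvalue_of_hasEigenvector
    ⟨Module.End.mem_eigenspace_iff.2 (by simpa using h), hv⟩).mem_spectrum

theorem pow_mulVec_eq_pow_smul [CommSemiring R] {A : Matrix n n R} {v : n → R} {μ : R}
    (h : A *ᵥ v = μ • v) (m : ℕ) : (A ^ m) *ᵥ v = μ ^ m • v := by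
  induction m with
  | zero => simp
  | succ m ih =>
    rw [pow_succ, ← mulVec_mulVec, h, mulVec_smul, ih, smul_smul, pow_succ, mul_comm]

end Matrix

theorem convexHull_setOf_mulVec_eq_smul_subset_HS {n : ℕ} {S : Set (Matrix (Fin n) (Fin n) ℂ)}
    {v : Fin n → ℂ} (hv : v ≠ 0) : convexHull ℝ {z | ∃ M ∈ S, M *ᵥ v = z • v} ⊆ HS S := by
  set P := {p : Matrix (Fin n) (Fin n) ℂ × ℂ | p.1 ∈ S ∧ p.1 *ᵥ v = p.2 • v}
  have hsnd : {z | ∃ M ∈ S, M *ᵥ v = z • v} = LinearMap.snd ℝ _ ℂ '' P := by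
    ext z
    simp [P]
  have hfst : LinearMap.fst ℝ _ ℂ '' P ⊆ S := by
    rintro - ⟨p, hp, rfl⟩
    exact hp.1
  intro z hz
  rw [hsnd, ← LinearMap.image_convexHull] at hz
  obtain ⟨⟨M, z⟩, hp, rfl⟩ := hz
  refine ⟨M, ?_, mem_spectrum_of_mulVec_eq_smul hv ?_⟩
  · refine convexHull_mono hfst ?_
    rw [← LinearMap.image_convexHull]
    exact ⟨_, hp, rfl⟩
  · exact convexHull_min (fun p hp ↦ hp.2) (convex_setOf_mulVec_eq_smul (𝕜 := ℝ) v) hp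

theorem polygon_subset_hull_spectrum_general {n k : ℕ} (hk : 0 < k)
    (G : Subgroup (GL (Fin n) ℂ))
    (A : GL (Fin n) ℂ) (hA : A ∈ G) (μ : ℂ)
    (hμspec : μ ∈ spectrum ℂ (A : Matrix (Fin n) (Fin n) ℂ))
    (hμprim : IsPrimitiveRoot μ k) :
    convexHull ℝ {z : ℂ | z ^ k = 1} ⊆
      HS ((fun B : GL (Fin n) ℂ => (B : Matrix (Fin n) (Fin n) ℂ)) '' (G : Set (GL (Fin n) ℂ))) := by
  have : NeZero k := ⟨hk.ne'⟩
  obtain ⟨v, hv, hAv⟩ := exists_mulVec_eq_smul_of_mem_spectrum hμspec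
  refine (convexHull_mono ?_).trans (convexHull_setOf_mulVec_eq_smul_subset_HS hv)
  intro z hz
  obtain ⟨m, -, rfl⟩ := hμprim.eq_pow_of_pow_eq_one hz
  exact ⟨_, ⟨A ^ m, pow_mem hA m, rfl⟩, by simpa using pow_mulVec_eq_pow_smul hAv m⟩

theorem polygon_subset_hull_spectrum {n k : ℕ} (hk : 0 < k)
    (G : Subgroup (GL (Fin n) ℂ)) [Finite G]
    (A : GL (Fin n) ℂ) (hA : A ∈ G) (μ : ℂ)
    (hμspec : μ ∈ spectrum ℂ (A : Matrix (Fin n) (Fin n) ℂ))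
    (hμprim : IsPrimitiveRoot μ k) :
    convexHull ℝ {z : ℂ | z ^ k = 1} ⊆
      HS ((fun B : GL (Fin n) ℂ => (B : Matrix (Fin n) (Fin n) ℂ)) '' (G : Set (GL (Fin n) ℂ))) :=
  polygon_subset_hull_spectrum_general hk G A hA μ hμspec hμprim
end

section
/- For a finite matrix group G, HS(G) ⊆ Conv(⋃_{k∈K} Π_k), where K is the set of positive integers k such that some A ∈ G has a primitive k-th root of unity as an eigenvalue and Π_k is the convex hull of the k-th roots of unity. -/
open Matrix

/-!
Averaging the standard Hermitian form over the finite group `G` gives a `G`-invariant positive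
definite form `⟪·, ·⟫`. If `M v = z v` with `v ≠ 0`, then `z = ⟪v, M v⟫ / ⟪v, v⟫`, and the right
side is `ℝ`-linear in `M`; so for `M` in the convex hull of `G`, `z` lies in the convex hull of the
values `⟪v, A v⟫ / ⟪v, v⟫`, `A ∈ G`. Each `A ∈ G` has finite order, so it is diagonalizable, and
since it preserves `⟪·, ·⟫` its eigenspaces are orthogonal. Splitting `v` along them exhibits
`⟪v, A v⟫ / ⟪v, v⟫` as a convex combination of eigenvalues `μ` of `A`, and `μ` is a vertex of the
polygon `Π_k` for `k` the order of `μ`.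
-/

open scoped ComplexOrder

namespace Module.End

open Polynomial in
theorem iSup_eigenspace_eq_top_of_pow_eq_one {K V : Type*} [Field K] [IsAlgClosed K] [CharZero K]
    [AddCommGroup V] [Module K V] [FiniteDimensional K V] {T : End K V} {m : ℕ} (hm : m ≠ 0)
    (hT : T ^ m = 1) : ⨆ μ, T.eigenspace μ = ⊤ := by
  have hsep : (X ^ m - C (1 : K)).Separable :=
    separable_X_pow_sub_C 1 (by exact_mod_cast hm) one_ne_zero
  have hss : T.IsSemisimple :=
    isSemisimple_of_squarefree_aeval_eq_zero hsep.squarefree (by simp [hT])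
  simpa [hss.isFinitelySemisimple.maxGenEigenspace_eq_eigenspace] using
    T.iSup_maxGenEigenspace_eq_top

theorem pow_eq_one_of_mem_eigenspace {K V : Type*} [Field K] [AddCommGroup V] [Module K V]
    {T : End K V} {m : ℕ} (hT : T ^ m = 1) {μ : K} {x : V} (hx : x ∈ T.eigenspace μ)
    (hx₀ : x ≠ 0) : μ ^ m = 1 := by
  have hpow := (show T.HasEigenvector μ x from ⟨hx, hx₀⟩).pow_apply m
  rw [hT, one_apply] at hpow
  exact smul_left_injective K hx₀ (hpow.symm.trans (one_smul K x).symm)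

end Module.End

namespace LinearMap

theorem apply_sum_sum_smul_of_isOrthoᵢ {R V ι : Type*} [CommRing R] [AddCommGroup V]
    [Module R V] {I : R →+* R} (f : V →ₛₗ[I] V →ₗ[R] R) {x : ι → V} (hx : f.IsOrthoᵢ x)
    (s : Finset ι) (c : ι → R) :
    f (∑ i ∈ s, x i) (∑ i ∈ s, c i • x i) = ∑ i ∈ s, c i * f (x i) (x i) := by
  classical
  simp only [map_sum, map_smul, LinearMap.sum_apply, smul_eq_mul]
  refine Finset.sum_congr rfl fun i hi => congrArg (c i * ·) ?_
  exact Finset.sum_eq_single i (fun j _ hji => hx hji) (by simp [hi])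

variable {V : Type*} [AddCommGroup V] [Module ℂ V] (f : V →ₗ⋆[ℂ] V →ₗ[ℂ] ℂ)

theorem apply_eq_zero_of_mem_eigenspace {T : Module.End ℂ V}
    (hT : ∀ x y, f (T x) (T y) = f x y) {μ ν : ℂ} (hμ : ‖μ‖ = 1) (hμν : μ ≠ ν) {x y : V}
    (hx : x ∈ T.eigenspace μ) (hy : y ∈ T.eigenspace ν) : f x y = 0 := by
  have h := hT x y
  rw [Module.End.mem_eigenspace_iff.1 hx, Module.End.mem_eigenspace_iff.1 hy, map_smulₛₗ₂,
    map_smul, smul_eq_mul, smul_eq_mul, ← mul_assoc] at h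
  have hμμ : μ * starRingEnd ℂ μ = 1 := by
    rw [Complex.mul_conj, Complex.normSq_eq_norm_sq, hμ]
    norm_num
  have hne : starRingEnd ℂ μ * ν ≠ 1 := fun h₁ => hμν <|
    calc μ = μ * (starRingEnd ℂ μ * ν) := by rw [h₁, mul_one]
      _ = ν := by rw [← mul_assoc, hμμ, one_mul]
  have : f x y * (starRingEnd ℂ μ * ν - 1) = 0 := by linear_combination h
  exact (mul_eq_zero.1 this).resolve_right (sub_ne_zero.2 hne)

theorem div_mem_convexHull_spectrum [FiniteDimensional ℂ V] (hf : f.IsNonneg)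
    {T : Module.End ℂ V} {m : ℕ} (hm : m ≠ 0) (hTm : T ^ m = 1)
    (hT : ∀ x y, f (T x) (T y) = f x y) {v : V} (hv : f v v ≠ 0) :
    f v (T v) / f v v ∈ convexHull ℝ (spectrum ℂ T) := by
  classical
  obtain ⟨u, hu, rfl⟩ := (Submodule.mem_iSup_iff_exists_finsupp _ v).1
    ((Module.End.iSup_eigenspace_eq_top_of_pow_eq_one hm hTm).ge Submodule.mem_top)
  have hortho : f.IsOrthoᵢ u := fun μ ν hμν => by
    show f (u μ) (u ν) = 0
    by_cases h₀ : u μ = 0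
    · simp [h₀]
    exact f.apply_eq_zero_of_mem_eigenspace hT (Complex.norm_eq_one_of_pow_eq_one
      (T.pow_eq_one_of_mem_eigenspace hTm (hu μ) h₀) hm) hμν (hu μ) (hu ν)
  have hTu : T (∑ μ ∈ u.support, u μ) = ∑ μ ∈ u.support, μ • u μ := by
    rw [map_sum]
    exact Finset.sum_congr rfl fun μ _ => Module.End.mem_eigenspace_iff.1 (hu μ)
  set w : ℂ → ℝ := fun μ => (f (u μ) (u μ)).re
  have hw : ∀ μ, (w μ : ℂ) = f (u μ) (u μ) := fun μ =>
    (Complex.eq_re_of_ofReal_le (hf.nonneg _)).symm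
  have hw₀ : ∀ μ, 0 ≤ w μ := fun μ => (Complex.nonneg_iff.1 (hf.nonneg _)).1
  have hvv : f (∑ μ ∈ u.support, u μ) (∑ μ ∈ u.support, u μ) = ∑ μ ∈ u.support, (w μ : ℂ) := by
    have := f.apply_sum_sum_smul_of_isOrthoᵢ hortho u.support 1
    simp only [Pi.one_apply, one_smul, one_mul] at this
    simp only [this, hw]
  have hvTv : f (∑ μ ∈ u.support, u μ) (T (∑ μ ∈ u.support, u μ)) =
      ∑ μ ∈ u.support, μ * w μ := by
    simpa only [hTu, hw] using f.apply_sum_sum_smul_of_isOrthoᵢ hortho u.support fun μ => μ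
  rw [Finsupp.sum, hvv] at hv
  rw [Finsupp.sum, hvv, hvTv]
  have hpos : 0 < ∑ μ ∈ u.support, w μ :=
    (Finset.sum_nonneg fun μ _ => hw₀ μ).lt_of_ne (by exact_mod_cast hv.symm)
  have hspec : ∀ μ ∈ u.support, μ ∈ spectrum ℂ T := fun μ hμ =>
    Module.End.HasEigenvalue.mem_spectrum
      (Module.End.hasEigenvalue_of_hasEigenvector ⟨hu μ, Finsupp.mem_support_iff.1 hμ⟩)
  convert u.support.centerMass_mem_convexHull (fun μ _ => hw₀ μ) hpos hspec using 1
  simp [Finset.centerMass, Complex.real_smul, div_eq_inv_mul, mul_comm]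

end LinearMap

section AveragedForm

variable {Γ V : Type*} [Fintype Γ] [AddCommGroup V] [Module ℂ V]

noncomputable def averagedForm [Monoid Γ] (f : V →ₗ⋆[ℂ] V →ₗ[ℂ] ℂ)
    (ρ : Representation ℂ Γ V) : V →ₗ⋆[ℂ] V →ₗ[ℂ] ℂ :=
  ∑ g, (f.comp (ρ g)).compl₂ (ρ g)

theorem averagedForm_apply [Monoid Γ] (f : V →ₗ⋆[ℂ] V →ₗ[ℂ] ℂ) (ρ : Representation ℂ Γ V)
    (x y : V) : averagedForm f ρ x y = ∑ g, f (ρ g x) (ρ g y) := by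
  simp [averagedForm]

theorem averagedForm_invariant [Group Γ] (f : V →ₗ⋆[ℂ] V →ₗ[ℂ] ℂ)
    (ρ : Representation ℂ Γ V) (h : Γ) (x y : V) :
    averagedForm f ρ (ρ h x) (ρ h y) = averagedForm f ρ x y := by
  simp only [averagedForm_apply, ← Module.End.mul_apply, ← map_mul]
  exact Fintype.sum_equiv (Equiv.mulRight h) _ _ fun _ => rfl

theorem averagedForm_isNonneg [Monoid Γ] {f : V →ₗ⋆[ℂ] V →ₗ[ℂ] ℂ} (hf : f.IsNonneg)
    (ρ : Representation ℂ Γ V) : (averagedForm f ρ).IsNonneg :=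
  ⟨fun x => by rw [averagedForm_apply]; exact Finset.sum_nonneg fun g _ => hf.nonneg _⟩

theorem averagedForm_self_pos [Monoid Γ] {f : V →ₗ⋆[ℂ] V →ₗ[ℂ] ℂ} (hf : f.IsNonneg)
    (ρ : Representation ℂ Γ V) {v : V} (hv : 0 < f v v) : 0 < averagedForm f ρ v v := by
  rw [averagedForm_apply]
  exact Finset.sum_pos' (fun g _ => hf.nonneg _) ⟨1, Finset.mem_univ _, by simpa using hv⟩

end AveragedForm

section Matrix

variable {ι : Type*} [Fintype ι] [DecidableEq ι]

theorem Matrix.exists_mulVec_eq_smul_of_mem_spectrum_s16 {K : Type*} [Field K] {M : Matrix ι ι K}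
    {z : K} (hz : z ∈ spectrum K M) : ∃ v ≠ 0, M *ᵥ v = z • v := by
  rw [← Matrix.spectrum_toLin', ← Module.End.hasEigenvalue_iff_mem_spectrum] at hz
  obtain ⟨v, hv⟩ := hz.exists_hasEigenvector
  exact ⟨v, hv.2, by simpa using hv.apply_eq_smul⟩

theorem Matrix.toLinearMapₛₗ₂'_one_apply {R : Type*} [CommRing R] [StarRing R] (x y : ι → R) :
    Matrix.toLinearMapₛₗ₂' R (starRingEnd R) (RingHom.id R) (1 : Matrix ι ι R) x y =
      star x ⬝ᵥ y := by
  simp [Matrix.toLinearMapₛₗ₂'_apply, Matrix.one_apply, dotProduct, starRingEnd_apply]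

theorem Subgroup.exists_linearMap_mem_convexHull_spectrum (G : Subgroup (GL ι ℂ)) [Finite G]
    {v : ι → ℂ} (hv : v ≠ 0) :
    ∃ Φ : Matrix ι ι ℂ →ₗ[ℝ] ℂ, (∀ M z, M *ᵥ v = z • v → Φ M = z) ∧
      ∀ A ∈ G, Φ A ∈ convexHull ℝ (spectrum ℂ (A : Matrix ι ι ℂ)) := by
  have := Fintype.ofFinite G
  let ρ : Representation ℂ G (ι → ℂ) :=
    Matrix.toLinAlgEquiv'.toAlgHom.toMonoidHom.comp ((Units.coeHom _).comp G.subtype)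
  let f₀ := Matrix.toLinearMapₛₗ₂' ℂ (starRingEnd ℂ) (RingHom.id ℂ) (1 : Matrix ι ι ℂ)
  have hf₀ : f₀.IsNonneg :=
    ⟨fun x => (Matrix.toLinearMapₛₗ₂'_one_apply x x).symm ▸ dotProduct_star_self_nonneg x⟩
  let f := averagedForm f₀ ρ
  have hvv : f v v ≠ 0 := (averagedForm_self_pos hf₀ ρ <|
    (Matrix.toLinearMapₛₗ₂'_one_apply v v).symm ▸ dotProduct_star_self_pos_iff.2 hv).ne'
  refine ⟨((f v v)⁻¹ • (f v ∘ₗ LinearMap.applyₗ v) ∘ₗ Matrix.toLin'.toLinearMap).restrictScalars ℝ,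
    fun M z hM => ?_, fun A hA => ?_⟩
  · simp [hM, mul_comm z, inv_mul_cancel_left₀ hvv]
  · have := f.div_mem_convexHull_spectrum (averagedForm_isNonneg hf₀ ρ)
      (orderOf_pos (⟨A, hA⟩ : G)).ne' (by rw [← map_pow, pow_orderOf_eq_one, map_one])
      (averagedForm_invariant f₀ ρ ⟨A, hA⟩) hvv
    simpa [div_eq_inv_mul, ρ] using this

end Matrix

theorem hull_spectrum_subset_convexHull_polygons {n : ℕ}
    (G : Subgroup (GL (Fin n) ℂ)) [Finite G] :
    HS ((fun A : GL (Fin n) ℂ => (A : Matrix (Fin n) (Fin n) ℂ)) '' (G : Set (GL (Fin n) ℂ))) ⊆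
      convexHull ℝ (⋃ k ∈ {k : ℕ | ∃ A ∈ G, ∃ μ : ℂ,
          μ ∈ spectrum ℂ (A : Matrix (Fin n) (Fin n) ℂ) ∧ IsPrimitiveRoot μ k},
        convexHull ℝ {z : ℂ | z ^ k = 1}) := by
  rintro z ⟨M, hM, hz⟩
  obtain ⟨v, hv, hMv⟩ := Matrix.exists_mulVec_eq_smul_of_mem_spectrum_s16 hz
  obtain ⟨Φ, hΦ_eig, hΦ_G⟩ := G.exists_linearMap_mem_convexHull_spectrum hv
  rw [← hΦ_eig M z hMv]
  refine convexHull_min ?_ (convex_convexHull ℝ _)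
    (Φ.image_convexHull _ ▸ Set.mem_image_of_mem Φ hM)
  rintro _ ⟨_, ⟨A, hA, rfl⟩, rfl⟩
  refine convexHull_min (fun μ hμ => ?_) (convex_convexHull ℝ _) (hΦ_G A hA)
  exact subset_convexHull ℝ _ <| Set.mem_biUnion ⟨A, hA, μ, hμ, IsPrimitiveRoot.orderOf μ⟩
    (subset_convexHull ℝ _ (pow_orderOf_eq_one μ))
end

section
/- Let n ≥ 3, θ = 2π/n, and let G ⊆ GL_2(ℝ) be the dihedral group generated by the rotation R = [[cos θ, −sin θ],[sin θ, cos θ]] and the reflection S = [[0,1],[1,0]]. Then HS(G) = Π_n ∪ Π_2, where Π_k is the convex hull of the k-th roots of unity and Π_2 = [−1,1]. -/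
/-!
Identify `ℝ²` with `ℂ` and write a real `2 × 2` matrix as `x ↦ w x + v x̄`. Its eigenvalues
are the roots of `(z - Re w)² = |v|² - (Im w)²`, so each one either lies on the vertical
segment from `w` to `w̄` or is real with `|z| ≤ |w| + |v|`. On the dihedral group, and hence on
its convex hull, `w` lies in the convex hull `Πₙ` of the `n`-th roots of unity and
`|w| + |v| ≤ 1`; as `Πₙ` is convex and closed under conjugation this gives `HS(G) ⊆ Πₙ ∪ [-1, 1]`.
Conversely, `z ∈ Πₙ` is an eigenvalue of multiplication by `z`, a convex combination of
rotations, and `±t` are the eigenvalues of `t S`, which for `0 ≤ t ≤ 1` lies between `S` and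
the average `0` of the rotations.
-/

open Matrix

/-- The hull spectrum (over ℂ) of a set of real 2×2 matrices. -/
def HSR (S : Set (Matrix (Fin 2) (Fin 2) ℝ)) : Set ℂ :=
  {z | ∃ M ∈ convexHull ℝ S, z ∈ spectrum ℂ (M.map (Complex.ofReal : ℝ → ℂ))}

open Complex ComplexConjugate Set

namespace IsPrimitiveRoot

variable {ζ : ℂ} {n : ℕ}

lemma image_pow_Iio (hζ : IsPrimitiveRoot ζ n) (hn : n ≠ 0) :
    (ζ ^ ·) '' Iio n = {z : ℂ | z ^ n = 1} := by
  have : NeZero n := ⟨hn⟩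
  ext z
  constructor
  · rintro ⟨k, -, rfl⟩
    change (ζ ^ k) ^ n = 1
    rw [pow_right_comm, hζ.pow_eq_one, one_pow]
  · intro hz
    obtain ⟨k, hk, rfl⟩ := hζ.eq_pow_of_pow_eq_one hz
    exact ⟨k, hk, rfl⟩

lemma zero_mem_convexHull (hζ : IsPrimitiveRoot ζ n) (hn : 1 < n) :
    (0 : ℂ) ∈ convexHull ℝ {z : ℂ | z ^ n = 1} := by
  have hcenter : (Finset.range n).centerMass (fun _ ↦ (1 : ℝ)) (ζ ^ ·) = 0 := by
    simp [Finset.centerMass, hζ.geom_sum_eq_zero hn]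
  rw [← hcenter]
  refine (Finset.range n).centerMass_mem_convexHull (fun _ _ ↦ zero_le_one) (by simp; omega) ?_
  intro k hk
  rw [← hζ.image_pow_Iio (by omega)]
  exact ⟨k, Finset.mem_range.mp hk, rfl⟩

end IsPrimitiveRoot

lemma conj_mem_convexHull_setOf_pow_eq_one {n : ℕ} {w : ℂ}
    (hw : w ∈ convexHull ℝ {z : ℂ | z ^ n = 1}) : conj w ∈ convexHull ℝ {z : ℂ | z ^ n = 1} := by
  have hroots : {z : ℂ | z ^ n = 1} ⊆ conjAe.toLinearMap ⁻¹' convexHull ℝ {z : ℂ | z ^ n = 1} :=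
    fun z hz ↦ subset_convexHull ℝ _ (show conj z ^ n = 1 by rw [← map_pow, hz, map_one])
  exact convexHull_min hroots ((convex_convexHull ℝ _).linear_preimage _) hw

lemma mem_of_re_eq_of_abs_im_le {C : Set ℂ} (hC : Convex ℝ C) (hconj : ∀ w ∈ C, conj w ∈ C)
    {w z : ℂ} (hw : w ∈ C) (hre : z.re = w.re) (him : |z.im| ≤ |w.im|) : z ∈ C := by
  have hcorner : (w.re : ℂ) + (conj w).im * I = conj w := by apply Complex.ext <;> simp
  have hcorner' : ((conj w).re : ℂ) + w.im * I = w := by apply Complex.ext <;> simp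
  apply hC.rectangle_subset hw (hconj w hw) (by rw [hcorner]; exact hconj w hw)
    (by rw [hcorner']; exact hw)
  simp only [Rectangle, mem_reProdIm, conj_re, conj_im, uIcc_self, mem_singleton_iff, hre,
    true_and, mem_uIcc]
  rcases abs_le.mp him with ⟨h₁, h₂⟩
  rcases abs_cases w.im with ⟨h, _⟩ | ⟨h, _⟩ <;> [right; left] <;> constructor <;> linarith

lemma mem_convexHull_sq_eq_one_iff {z : ℂ} :
    z ∈ convexHull ℝ {z : ℂ | z ^ 2 = 1} ↔ z.im = 0 ∧ |z.re| ≤ 1 := by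
  have hrect : convexHull ℝ {z : ℂ | z ^ 2 = 1} = Rectangle 1 (-1) := by
    rw [rectangle_eq_convexHull]
    congr 1
    ext z
    simp
  rw [hrect, Rectangle, mem_reProdIm, uIcc_of_ge (by norm_num), abs_le]
  simp [and_comm]

lemma re_eq_or_im_eq_zero_of_sq_eq {z : ℂ} {p q r : ℝ}
    (h : (z - p) ^ 2 = ((r ^ 2 - q ^ 2 : ℝ) : ℂ)) :
    (z.re = p ∧ |z.im| ≤ |q|) ∨ (z.im = 0 ∧ |z.re - p| ≤ |r|) := by
  have hre := congrArg re h
  have him := congrArg im h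
  simp only [sq, mul_re, mul_im, sub_re, sub_im, ofReal_re, ofReal_im, sub_zero] at hre him
  rcases mul_eq_zero.mp (show (z.re - p) * z.im = 0 by linarith) with hx | hy
  · exact .inl ⟨by linarith, sq_le_sq.mp (by nlinarith [sq_nonneg r])⟩
  · exact .inr ⟨hy, sq_le_sq.mp (by nlinarith [sq_nonneg q])⟩

namespace HullSpectrum

local notation "σ" => !![(0 : ℝ), 1; 1, 0]

noncomputable abbrev mulMatrix : ℂ →ₐ[ℝ] Matrix (Fin 2) (Fin 2) ℝ :=
  Algebra.leftMulMatrix basisOneI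

/-- Together with `reflPart`, this writes the action of `A` on `ℂ ≅ ℝ²` as
`x ↦ rotPart A * x + reflPart A * conj x`. -/
noncomputable def rotPart : Matrix (Fin 2) (Fin 2) ℝ →ₗ[ℝ] ℂ where
  toFun A := ⟨(A 0 0 + A 1 1) / 2, (A 1 0 - A 0 1) / 2⟩
  map_add' A B := by apply Complex.ext <;> simp <;> ring
  map_smul' c A := by apply Complex.ext <;> simp <;> ring

noncomputable def reflPart : Matrix (Fin 2) (Fin 2) ℝ →ₗ[ℝ] ℂ where
  toFun A := ⟨(A 0 0 - A 1 1) / 2, (A 0 1 + A 1 0) / 2⟩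
  map_add' A B := by apply Complex.ext <;> simp <;> ring
  map_smul' c A := by apply Complex.ext <;> simp <;> ring

lemma rotPart_mulMatrix (z : ℂ) : rotPart (mulMatrix z) = z := by
  apply Complex.ext <;> simp [rotPart, Algebra.leftMulMatrix_complex]

lemma reflPart_mulMatrix (z : ℂ) : reflPart (mulMatrix z) = 0 := by
  apply Complex.ext <;> simp [reflPart, Algebra.leftMulMatrix_complex]

lemma rotPart_mulMatrix_mul_swap (z : ℂ) : rotPart (mulMatrix z * σ) = 0 := by
  apply Complex.ext <;> simp [rotPart, Algebra.leftMulMatrix_complex]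

lemma reflPart_mulMatrix_mul_swap (z : ℂ) : reflPart (mulMatrix z * σ) = I * z := by
  apply Complex.ext <;> simp [reflPart, Algebra.leftMulMatrix_complex]
  ring

lemma mulMatrix_ofReal_mul_swap (t : ℝ) : mulMatrix t * σ = t • σ := by
  rw [← coe_algebraMap, AlgHom.commutes, Algebra.algebraMap_eq_smul_one, smul_mul_assoc, one_mul]

lemma mem_spectrum_map_ofReal_iff (A : Matrix (Fin 2) (Fin 2) ℝ) (z : ℂ) :
    z ∈ spectrum ℂ (A.map ofReal) ↔
      (z - (rotPart A).re) ^ 2 = ((‖reflPart A‖ ^ 2 - (rotPart A).im ^ 2 : ℝ) : ℂ) := by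
  rw [spectrum.mem_iff, isUnit_iff_isUnit_det, isUnit_iff_ne_zero, not_not, det_fin_two,
    ← sub_eq_zero, Complex.sq_norm, normSq_apply]
  simp [rotPart, reflPart, algebraMap_matrix_apply]
  constructor <;> intro h <;> linear_combination h

lemma mem_spectrum_mulMatrix (z : ℂ) : z ∈ spectrum ℂ ((mulMatrix z).map ofReal) := by
  rw [mem_spectrum_map_ofReal_iff, rotPart_mulMatrix, reflPart_mulMatrix]
  have him : z - z.re = z.im * I := by apply Complex.ext <;> simp
  rw [him, norm_zero]
  push_cast
  linear_combination (z.im : ℂ) ^ 2 * I_sq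

lemma ofReal_mem_spectrum_abs_smul_swap (t : ℝ) :
    (t : ℂ) ∈ spectrum ℂ ((|t| • σ).map ofReal) := by
  rw [← mulMatrix_ofReal_mul_swap, mem_spectrum_map_ofReal_iff, rotPart_mulMatrix_mul_swap,
    reflPart_mulMatrix_mul_swap]
  simp

lemma mem_or_real_of_mem_spectrum {C : Set ℂ} (hC : Convex ℝ C) (hconj : ∀ w ∈ C, conj w ∈ C)
    {A : Matrix (Fin 2) (Fin 2) ℝ} (hA : rotPart A ∈ C) {z : ℂ}
    (hz : z ∈ spectrum ℂ (A.map ofReal)) :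
    z ∈ C ∨ z.im = 0 ∧ |z.re| ≤ ‖rotPart A‖ + ‖reflPart A‖ := by
  rw [mem_spectrum_map_ofReal_iff] at hz
  rcases re_eq_or_im_eq_zero_of_sq_eq hz with ⟨hre, him⟩ | ⟨him, hre⟩
  · exact .inl (mem_of_re_eq_of_abs_im_le hC hconj hA hre him)
  · refine .inr ⟨him, ?_⟩
    calc |z.re| ≤ |(rotPart A).re| + |z.re - (rotPart A).re| := by
          linarith [abs_sub_abs_le_abs_sub z.re (rotPart A).re]
      _ ≤ ‖rotPart A‖ + ‖reflPart A‖ := by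
        gcongr
        · exact abs_re_le_norm _
        · simpa using hre

lemma convex_setOf_rotPart_mem_and_norm_add_le {C : Set ℂ} (hC : Convex ℝ C) :
    Convex ℝ {A : Matrix (Fin 2) (Fin 2) ℝ | rotPart A ∈ C ∧ ‖rotPart A‖ + ‖reflPart A‖ ≤ 1} := by
  have hnorm : ConvexOn ℝ univ fun A : Matrix (Fin 2) (Fin 2) ℝ ↦ ‖rotPart A‖ + ‖reflPart A‖ :=
    ((convexOn_norm convex_univ).comp_linearMap rotPart).add
      ((convexOn_norm convex_univ).comp_linearMap reflPart)
  have hle := hnorm.convex_le 1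
  simp only [mem_univ, true_and] at hle
  exact (hC.linear_preimage rotPart).inter hle

theorem hullSpectrum_subset {S : Set (Matrix (Fin 2) (Fin 2) ℝ)} {C : Set ℂ} (hC : Convex ℝ C)
    (hconj : ∀ w ∈ C, conj w ∈ C)
    (hS : ∀ A ∈ S, rotPart A ∈ C ∧ ‖rotPart A‖ + ‖reflPart A‖ ≤ 1) :
    HSR S ⊆ C ∪ convexHull ℝ {z : ℂ | z ^ 2 = 1} := by
  rintro z ⟨M, hM, hz⟩
  obtain ⟨hMC, hMnorm⟩ := convexHull_min hS (convex_setOf_rotPart_mem_and_norm_add_le hC) hM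
  refine (mem_or_real_of_mem_spectrum hC hconj hMC hz).imp_right fun ⟨him, hre⟩ ↦ ?_
  exact mem_convexHull_sq_eq_one_iff.mpr ⟨him, hre.trans hMnorm⟩

def dihedralMatrices (ζ : ℂ) (n : ℕ) : Set (Matrix (Fin 2) (Fin 2) ℝ) :=
  (fun k : ℕ ↦ mulMatrix ζ ^ k) '' Iio n ∪ (fun k : ℕ ↦ mulMatrix ζ ^ k * σ) '' Iio n

variable {ζ : ℂ} {n : ℕ}

lemma mulMatrix_image_convexHull_subset (hζ : IsPrimitiveRoot ζ n) (hn : n ≠ 0) :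
    mulMatrix '' convexHull ℝ {z : ℂ | z ^ n = 1} ⊆ convexHull ℝ (dihedralMatrices ζ n) := by
  rw [← AlgHom.coe_toLinearMap, LinearMap.image_convexHull, ← hζ.image_pow_Iio hn, image_image]
  refine convexHull_mono (subset_union_of_subset_left ?_ _)
  simp [map_pow]

lemma hullSpectrum_dihedralMatrices_subset (hζ : IsPrimitiveRoot ζ n) (hn : 1 < n) :
    HSR (dihedralMatrices ζ n) ⊆
      convexHull ℝ {z : ℂ | z ^ n = 1} ∪ convexHull ℝ {z : ℂ | z ^ 2 = 1} := by
  refine hullSpectrum_subset (convex_convexHull ℝ _)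
    (fun _ ↦ conj_mem_convexHull_setOf_pow_eq_one) ?_
  have hnorm (k : ℕ) : ‖ζ ^ k‖ = 1 := by rw [norm_pow, hζ.norm'_eq_one (by omega), one_pow]
  rintro _ (⟨k, hk, rfl⟩ | ⟨k, hk, rfl⟩) <;> dsimp only <;> rw [← map_pow mulMatrix]
  · rw [rotPart_mulMatrix, reflPart_mulMatrix, hnorm, norm_zero, add_zero]
    rw [← hζ.image_pow_Iio (by omega)]
    exact ⟨subset_convexHull ℝ _ ⟨k, hk, rfl⟩, le_rfl⟩
  · rw [rotPart_mulMatrix_mul_swap, reflPart_mulMatrix_mul_swap, norm_mul, norm_I, one_mul,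
      hnorm, norm_zero, zero_add]
    exact ⟨hζ.zero_mem_convexHull hn, le_rfl⟩

lemma subset_hullSpectrum_dihedralMatrices (hζ : IsPrimitiveRoot ζ n) (hn : 1 < n) :
    convexHull ℝ {z : ℂ | z ^ n = 1} ∪ convexHull ℝ {z : ℂ | z ^ 2 = 1} ⊆
      HSR (dihedralMatrices ζ n) := by
  have hmul := mulMatrix_image_convexHull_subset hζ (by omega)
  rintro z (hz | hz)
  · exact ⟨mulMatrix z, hmul ⟨z, hz, rfl⟩, mem_spectrum_mulMatrix z⟩
  obtain ⟨him, hre⟩ := mem_convexHull_sq_eq_one_iff.mp hz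
  have hσ : σ ∈ convexHull ℝ (dihedralMatrices ζ n) :=
    subset_convexHull ℝ _ (.inr ⟨0, by simpa using hn.pos, by simp⟩)
  have h0 : (0 : Matrix (Fin 2) (Fin 2) ℝ) ∈ convexHull ℝ (dihedralMatrices ζ n) := by
    simpa using hmul ⟨0, hζ.zero_mem_convexHull hn, rfl⟩
  refine ⟨|z.re| • σ, ?_, ?_⟩
  · simpa using convex_convexHull ℝ _ hσ h0 (abs_nonneg z.re) (by linarith) (add_sub_cancel _ _)
  · convert ofReal_mem_spectrum_abs_smul_swap z.re
    exact Complex.ext rfl him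

theorem hullSpectrum_dihedralMatrices (hζ : IsPrimitiveRoot ζ n) (hn : 1 < n) :
    HSR (dihedralMatrices ζ n) =
      convexHull ℝ {z : ℂ | z ^ n = 1} ∪ convexHull ℝ {z : ℂ | z ^ 2 = 1} :=
  (hullSpectrum_dihedralMatrices_subset hζ hn).antisymm
    (subset_hullSpectrum_dihedralMatrices hζ hn)

end HullSpectrum

open HullSpectrum in
theorem hull_spectrum_dihedral (n : ℕ) (hn : 3 ≤ n) :
    HSR ((fun k : ℕ => (!![Real.cos (2 * Real.pi / n), -Real.sin (2 * Real.pi / n);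
            Real.sin (2 * Real.pi / n), Real.cos (2 * Real.pi / n)]) ^ k) '' Set.Iio n ∪
        (fun k : ℕ => (!![Real.cos (2 * Real.pi / n), -Real.sin (2 * Real.pi / n);
            Real.sin (2 * Real.pi / n), Real.cos (2 * Real.pi / n)]) ^ k *
          !![(0 : ℝ), 1; 1, 0]) '' Set.Iio n) =
      convexHull ℝ {z : ℂ | z ^ n = 1} ∪ convexHull ℝ {z : ℂ | z ^ 2 = 1} := by
  have hR : !![Real.cos (2 * Real.pi / n), -Real.sin (2 * Real.pi / n);
      Real.sin (2 * Real.pi / n), Real.cos (2 * Real.pi / n)] =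
        mulMatrix (exp (2 * Real.pi * I / n)) := by
    rw [Algebra.leftMulMatrix_complex,
      show 2 * Real.pi * I / n = (2 * Real.pi / n : ℝ) * I by push_cast; ring,
      exp_ofReal_mul_I_re, exp_ofReal_mul_I_im]
  rw [hR]
  exact hullSpectrum_dihedralMatrices (isPrimitiveRoot_exp n (by omega)) (by omega)
end

section
/- Let G ⊆ GL_2(ℂ) be the image of the 2-dimensional irreducible representation of the quaternion group Q_8, generated by r = [[i,0],[0,−i]] and s = [[0,−1],[1,0]]. Then HS(G) = Π_4 = {z ∈ ℂ : |Re z| + |Im z| ≤ 1}. -/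
/-!
Real combinations `a + b r + c s + d rs` form a copy of the quaternions, and the convex hull of
the eight group elements lies among those with `|a| + |b| + |c| + |d| ≤ 1`. Such a matrix has
characteristic polynomial `(z - a)² + b² + c² + d²`, so its eigenvalues `a ± i √(b² + c² + d²)`
satisfy `|Re z| + |Im z| ≤ |a| + |b| + |c| + |d| ≤ 1`. Conversely `x + i y` is an eigenvalue of
the diagonal matrix `x + y r`, which lies in the convex hull of `±1, ±r` when `|x| + |y| ≤ 1`.
-/

open Matrix Complex

theorem exists_mem_pair_neg_smul_eq_abs_smul {R E : Type*} [Ring R] [LinearOrder R]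
    [AddCommGroup E] [Module R E] (x : R) (u : E) :
    ∃ u' ∈ ({u, -u} : Set E), x • u = |x| • u' := by
  rcases abs_choice x with h | h
  · exact ⟨u, by simp, by rw [h]⟩
  · exact ⟨-u, by simp, by rw [h, neg_smul_neg]⟩

section ConvexHull

variable {𝕜 E : Type*} [Field 𝕜] [LinearOrder 𝕜] [IsStrictOrderedRing 𝕜] [AddCommGroup E]
  [Module 𝕜 E]

theorem Convex.smul_add_smul_mem_of_zero_mem {s : Set E} (hs : Convex 𝕜 s) (h0 : (0 : E) ∈ s)
    {a b : E} (ha : a ∈ s) (hb : b ∈ s) {α β : 𝕜} (hα : 0 ≤ α) (hβ : 0 ≤ β) (hαβ : α + β ≤ 1) :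
    α • a + β • b ∈ s := by
  rcases (add_nonneg hα hβ).eq_or_lt with h | h
  · obtain ⟨rfl, rfl⟩ : α = 0 ∧ β = 0 := by constructor <;> linarith
    simpa using h0
  have hcomb := hs.smul_mem_of_zero_mem h0
    (hs ha hb (div_nonneg hα h.le) (div_nonneg hβ h.le) (by field_simp)) ⟨h.le, hαβ⟩
  convert hcomb using 1
  simp only [smul_add, smul_smul, mul_div_cancel₀ _ h.ne']

theorem smul_add_smul_mem_convexHull {x y : 𝕜} (h : |x| + |y| ≤ 1) (u v : E) :
    x • u + y • v ∈ convexHull 𝕜 {u, -u, v, -v} := by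
  set K := convexHull 𝕜 ({u, -u, v, -v} : Set E)
  have hK : Convex 𝕜 K := convex_convexHull 𝕜 _
  have hu : {u, -u} ⊆ K := Set.pair_subset_iff.2 ⟨subset_convexHull 𝕜 _ (by simp),
    subset_convexHull 𝕜 _ (by simp)⟩
  have hv : {v, -v} ⊆ K := Set.pair_subset_iff.2 ⟨subset_convexHull 𝕜 _ (by simp),
    subset_convexHull 𝕜 _ (by simp)⟩
  have h0 : (0 : E) ∈ K := by
    simpa using hK (hu (.inl rfl)) (hu (.inr rfl)) (by norm_num : (0 : 𝕜) ≤ 1 / 2)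
      (by norm_num : (0 : 𝕜) ≤ 1 / 2) (by norm_num)
  obtain ⟨u', hu', hxu⟩ := exists_mem_pair_neg_smul_eq_abs_smul x u
  obtain ⟨v', hv', hyv⟩ := exists_mem_pair_neg_smul_eq_abs_smul y v
  rw [hxu, hyv]
  exact hK.smul_add_smul_mem_of_zero_mem h0 (hu hu') (hv hv') (abs_nonneg x) (abs_nonneg y) h

end ConvexHull

theorem Complex.re_eq_zero_and_im_sq_of_sq_eq_neg {w : ℂ} {q : ℝ} (hq : 0 ≤ q)
    (h : w ^ 2 = -q) : w.re = 0 ∧ w.im ^ 2 = q := by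
  have hre := congrArg re h
  have him := congrArg im h
  simp only [sq, mul_re, mul_im, neg_re, ofReal_re, neg_im, ofReal_im, neg_zero] at hre him
  have hreim : w.re * w.im = 0 := by linarith
  rcases mul_eq_zero.mp hreim with hr | hi
  · exact ⟨hr, by rw [hr] at hre; linarith⟩
  · rw [hi] at hre
    have hr : w.re = 0 := by nlinarith
    exact ⟨hr, by rw [hi]; nlinarith⟩

def quatR : Matrix (Fin 2) (Fin 2) ℂ := !![I, 0; 0, -I]

def quatS : Matrix (Fin 2) (Fin 2) ℂ := !![0, -1; 1, 0]

noncomputable def quatMatrix (a b c d : ℝ) : Matrix (Fin 2) (Fin 2) ℂ :=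
  a • 1 + b • quatR + c • quatS + d • (quatR * quatS)

theorem quatMatrix_eq (a b c d : ℝ) :
    quatMatrix a b c d = !![a + b * I, -c - d * I; c - d * I, a - b * I] := by
  ext i j
  fin_cases i <;> fin_cases j <;>
    simp [quatMatrix, quatR, quatS, Complex.real_smul, sub_eq_add_neg]

theorem smul_quatMatrix_add_smul_quatMatrix (t u a b c d a' b' c' d' : ℝ) :
    t • quatMatrix a b c d + u • quatMatrix a' b' c' d' =
      quatMatrix (t * a + u * a') (t * b + u * b') (t * c + u * c') (t * d + u * d') := by
  simp only [quatMatrix, smul_add, smul_smul, add_smul]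
  abel

theorem mem_spectrum_quatMatrix_iff {a b c d : ℝ} {z : ℂ} :
    z ∈ spectrum ℂ (quatMatrix a b c d) ↔ (z - a) ^ 2 = -((b ^ 2 + c ^ 2 + d ^ 2 : ℝ) : ℂ) := by
  rw [spectrum.mem_iff, isUnit_iff_isUnit_det, isUnit_iff_ne_zero, not_ne_iff, det_fin_two,
    quatMatrix_eq, ← add_eq_zero_iff_eq_neg]
  simp only [Matrix.sub_apply, algebraMap_matrix_apply, of_apply, cons_val', cons_val_zero,
    cons_val_one, cons_val_fin_one, Algebra.algebraMap_self, RingHom.id_apply, if_true,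
    zero_ne_one, one_ne_zero, if_false, ofReal_add, ofReal_pow]
  exact Eq.congr_left (by linear_combination (-(b ^ 2 + d ^ 2 : ℂ)) * I_sq)

theorem abs_re_add_abs_im_le_of_mem_spectrum_quatMatrix {a b c d : ℝ} {z : ℂ}
    (hz : z ∈ spectrum ℂ (quatMatrix a b c d)) : |z.re| + |z.im| ≤ |a| + |b| + |c| + |d| := by
  rw [mem_spectrum_quatMatrix_iff] at hz
  obtain ⟨hre, him⟩ := Complex.re_eq_zero_and_im_sq_of_sq_eq_neg (by positivity) hz
  simp only [sub_re, ofReal_re, sub_eq_zero, sub_im, ofReal_im, sub_zero] at hre him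
  have him_le : |z.im| ≤ |b| + |c| + |d| := by
    rw [← abs_of_nonneg (by positivity : 0 ≤ |b| + |c| + |d|), ← sq_le_sq, him]
    nlinarith [sq_abs b, sq_abs c, sq_abs d, abs_nonneg b, abs_nonneg c, abs_nonneg d]
  rw [hre]
  linarith

def quatBall : Set (Matrix (Fin 2) (Fin 2) ℂ) :=
  {M | ∃ a b c d : ℝ, |a| + |b| + |c| + |d| ≤ 1 ∧ quatMatrix a b c d = M}

theorem abs_mul_add_mul_le {t u : ℝ} (ht : 0 ≤ t) (hu : 0 ≤ u) (a a' : ℝ) :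
    |t * a + u * a'| ≤ t * |a| + u * |a'| :=
  (abs_add_le _ _).trans_eq (by rw [abs_mul, abs_mul, abs_of_nonneg ht, abs_of_nonneg hu])

theorem convex_quatBall : Convex ℝ quatBall := by
  rintro _ ⟨a, b, c, d, hM, rfl⟩ _ ⟨a', b', c', d', hN, rfl⟩ t u ht hu htu
  refine ⟨_, _, _, _, ?_, (smul_quatMatrix_add_smul_quatMatrix ..).symm⟩
  have := abs_mul_add_mul_le ht hu
  nlinarith [this a a', this b b', this c c', this d d']

theorem quaternionGroup_subset_quatBall :
    ({1, -1, quatR, -quatR, quatS, -quatS, quatR * quatS, -(quatR * quatS)} :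
      Set (Matrix (Fin 2) (Fin 2) ℂ)) ⊆ quatBall := by
  simp only [Set.insert_subset_iff, Set.singleton_subset_iff]
  refine ⟨⟨1, 0, 0, 0, ?_⟩, ⟨-1, 0, 0, 0, ?_⟩, ⟨0, 1, 0, 0, ?_⟩, ⟨0, -1, 0, 0, ?_⟩,
    ⟨0, 0, 1, 0, ?_⟩, ⟨0, 0, -1, 0, ?_⟩, ⟨0, 0, 0, 1, ?_⟩, ⟨0, 0, 0, -1, ?_⟩⟩ <;>
    simp [quatMatrix]

theorem hull_spectrum_quaternion :
    HS ({1, -1, !![I, 0; 0, -I], -(!![I, 0; 0, -I]), !![0, -1; 1, 0], -(!![0, -1; 1, 0]),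
        !![I, 0; 0, -I] * !![0, -1; 1, 0], -(!![I, 0; 0, -I] * !![0, -1; 1, 0])} :
        Set (Matrix (Fin 2) (Fin 2) ℂ)) =
      {z : ℂ | |z.re| + |z.im| ≤ 1} := by
  ext z
  constructor
  · rintro ⟨M, hM, hz⟩
    obtain ⟨a, b, c, d, hl1, rfl⟩ :=
      convexHull_min quaternionGroup_subset_quatBall convex_quatBall hM
    exact (abs_re_add_abs_im_le_of_mem_spectrum_quatMatrix hz).trans hl1
  · intro hz
    refine ⟨quatMatrix z.re z.im 0 0, ?_, ?_⟩
    · have hdiag : quatMatrix z.re z.im 0 0 = z.re • 1 + z.im • quatR := by simp [quatMatrix]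
      rw [hdiag]
      refine convexHull_mono ?_ (smul_add_smul_mem_convexHull hz 1 quatR)
      simp [Set.insert_subset_iff, quatR]
    · rw [mem_spectrum_quatMatrix_iff]
      apply Complex.ext <;> simp [sq]
end
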